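/- arXiv:1905.11035 — 5 statements merged into one kernel-verified Lean document; each statement's English description precedes it below -/
import Mathlib

section
/- Let a, b, c, d, p, q, r be positive real numbers with q > p·r and y* := q/p − r ≤ ((1+a)/2)². Define x* := (1−a)/2 + √(((1+a)/2)² − y*) and z* := (c·x*/(a+x*) − b)·(y* + d). Then the point (x*, y*, z*) is an equilibrium of the rescaled food chain system, i.e., x*(1−x*) − x*·y*/(x*+a) = 0, c·x*·y*/(x*+a) − b·y* − y*·z*/(y*+d) = 0, and p·(z*)² − q·(z*)²/(y*+r) = 0. -/
/-! The three equations decouple. `y*` is chosen so that `y* + r = q / p`, which kills the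
top-predator equation; `z*` is the value of `z` that solves the predator equation, which is
linear in `z`; and `x*` is the larger root of the prey nullcline `(1 - x)(x + a) = y*`, whose
roots are `(1 - a)/2 ± √(((1 + a)/2)² - y*)`. -/

section LeslieGower

variable {a b c d p q r x y z : ℝ}

lemma one_sub_mul_add_eq_of_eq_root (hy : y ≤ ((1 + a) / 2) ^ 2)
    (hx : x = (1 - a) / 2 + √(((1 + a) / 2) ^ 2 - y)) :
    (1 - x) * (x + a) = y := by
  have hs : √(((1 + a) / 2) ^ 2 - y) ^ 2 = ((1 + a) / 2) ^ 2 - y :=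
    Real.sq_sqrt (sub_nonneg.mpr hy)
  subst hx
  linear_combination -hs

lemma add_pos_of_eq_root (ha : -1 < a) (hx : x = (1 - a) / 2 + √(((1 + a) / 2) ^ 2 - y)) :
    0 < x + a := by
  have := Real.sqrt_nonneg (((1 + a) / 2) ^ 2 - y)
  rw [hx]
  linarith

lemma prey_rhs_eq_zero (hxa : x + a ≠ 0) (hkey : (1 - x) * (x + a) = y) :
    x * (1 - x) - x * y / (x + a) = 0 := by
  rw [← hkey, mul_div_assoc, mul_div_cancel_right₀ _ hxa]
  ring

lemma predator_rhs_eq_zero (hyd : y + d ≠ 0) (hz : z = (c * x / (a + x) - b) * (y + d)) :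
    c * x * y / (x + a) - b * y - y * z / (y + d) = 0 := by
  rw [hz, add_comm x a, mul_div_assoc y, mul_div_cancel_right₀ _ hyd]
  ring

lemma top_predator_rhs_eq_zero (hq : q ≠ 0) (hyr : y + r = q / p) :
    p * z ^ 2 - q * z ^ 2 / (y + r) = 0 := by
  rw [hyr]
  field_simp
  ring

end LeslieGower

theorem interior_point_is_equilibrium_general
    (a b c d p q r : ℝ)
    (ha : 0 < a) (hd : 0 < d)
    (hp : 0 < p) (hq : 0 < q)
    (hqpr : q > p * r)
    (ystar : ℝ) (hy : ystar = q / p - r)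
    (hyle : ystar ≤ ((1 + a) / 2) ^ 2)
    (xstar : ℝ) (hx : xstar = (1 - a) / 2 + Real.sqrt (((1 + a) / 2) ^ 2 - ystar))
    (zstar : ℝ) (hz : zstar = (c * xstar / (a + xstar) - b) * (ystar + d)) :
    xstar * (1 - xstar) - xstar * ystar / (xstar + a) = 0 ∧
    c * xstar * ystar / (xstar + a) - b * ystar - ystar * zstar / (ystar + d) = 0 ∧
    p * zstar ^ 2 - q * zstar ^ 2 / (ystar + r) = 0 := by
  have hystar : 0 < ystar := hy ▸ sub_pos.mpr ((lt_div_iff₀ hp).mpr (by linarith))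
  have hxa : 0 < xstar + a := add_pos_of_eq_root (by linarith) hx
  refine ⟨prey_rhs_eq_zero hxa.ne' (one_sub_mul_add_eq_of_eq_root hyle hx),
    predator_rhs_eq_zero (by linarith) hz,
    top_predator_rhs_eq_zero hq.ne' (by rw [hy]; ring)⟩

/-- The point `(x*, y*, z*)` given by the equilibrium relations is an equilibrium of the
rescaled Leslie–Gower tritrophic food chain system. -/
theorem interior_point_is_equilibrium
    (a b c d p q r : ℝ)
    (ha : 0 < a) (hb : 0 < b) (hc : 0 < c) (hd : 0 < d)
    (hp : 0 < p) (hq : 0 < q) (hr : 0 < r)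
    (hqpr : q > p * r)
    (ystar : ℝ) (hy : ystar = q / p - r)
    (hyle : ystar ≤ ((1 + a) / 2) ^ 2)
    (xstar : ℝ) (hx : xstar = (1 - a) / 2 + Real.sqrt (((1 + a) / 2) ^ 2 - ystar))
    (zstar : ℝ) (hz : zstar = (c * xstar / (a + xstar) - b) * (ystar + d)) :
    xstar * (1 - xstar) - xstar * ystar / (xstar + a) = 0 ∧
    c * xstar * ystar / (xstar + a) - b * ystar - ystar * zstar / (ystar + d) = 0 ∧
    p * zstar ^ 2 - q * zstar ^ 2 / (ystar + r) = 0 :=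
  interior_point_is_equilibrium_general a b c d p q r ha hd hp hq hqpr ystar hy hyle xstar hx zstar
    hz
end

section
/- Let a, b, c, d, p, q, r be positive real numbers with q > p·r and y* := q/p − r < a, and set x* := (1−a)/2 + √(((1+a)/2)² − y*) and z* := (c·x*/(a+x*) − b)·(y* + d). If (x, y, z) is any point with x > 0, y > 0, z > 0 satisfying x(1−x) − xy/(x+a) = 0, cxy/(x+a) − by − yz/(y+d) = 0, and pz² − qz²/(y+r) = 0, then (x, y, z) = (x*, y*, z*). In particular the interior (componentwise positive) equilibrium of the system is unique. -/
/-! On an interior equilibrium each nullcline can be divided by the positive population it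
carries. The top-predator equation then reads `p = q / (y + r)`, fixing `y`; the prey equation
becomes the quadratic `x² - (1 - a) x + (y - a) = 0`, whose roots have product `y - a < 0`, so
exactly one of them is positive; and the middle-predator equation is linear in `z`. -/

lemma eq_div_of_mul_sq_sub_div_eq_zero {p q w z : ℝ} (hp : p ≠ 0) (hz : z ≠ 0)
    (h : p * z ^ 2 - q * z ^ 2 / w = 0) : w = q / p := by
  have hpw : p = q / w := by
    have : z ^ 2 * (p - q / w) = 0 := by linear_combination h
    linear_combination (mul_eq_zero.mp this).resolve_left (pow_ne_zero 2 hz)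
  have hw : w ≠ 0 := by
    -- with `w = 0` the junk value `q / 0 = 0` would force `p = 0`
    rintro rfl
    exact hp (by simpa using hpw)
  rw [eq_div_iff hp, mul_comm]
  exact (eq_div_iff hw).mp hpw

lemma sq_sub_mul_add_eq_zero_of_mul_sub_div_eq_zero {a x y : ℝ} (hx : x ≠ 0) (hxa : x + a ≠ 0)
    (h : x * (1 - x) - x * y / (x + a) = 0) : x ^ 2 - (1 - a) * x + (y - a) = 0 := by
  have : x * ((1 - x) * (x + a) - y) = 0 := by
    field_simp at h
    linear_combination h
  linear_combination -(mul_eq_zero.mp this).resolve_left hx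

lemma eq_add_sqrt_of_sq_sub_mul_add_eq_zero {B C x : ℝ} (hC : C < 0) (hx : 0 < x)
    (h : x ^ 2 - B * x + C = 0) : x = B / 2 + √((B / 2) ^ 2 - C) := by
  set s := √((B / 2) ^ 2 - C)
  have hs : 0 ≤ s := Real.sqrt_nonneg _
  have hs2 : s ^ 2 = (B / 2) ^ 2 - C := Real.sq_sqrt (by linarith [sq_nonneg (B / 2)])
  have : (x - B / 2) ^ 2 = s ^ 2 := by linear_combination h - hs2
  rcases sq_eq_sq_iff_eq_or_eq_neg.mp this with h | h
  · linarith
  · -- the roots `B/2 ± s` have product `C < 0`, so `B/2 - s` cannot be positive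
    nlinarith

lemma eq_mul_of_div_sub_mul_sub_div_eq_zero {a b c d x y z : ℝ} (hy : y ≠ 0) (hyd : y + d ≠ 0)
    (h : c * x * y / (x + a) - b * y - y * z / (y + d) = 0) :
    z = (c * x / (x + a) - b) * (y + d) := by
  have : y * (c * x / (x + a) - b - z / (y + d)) = 0 := by linear_combination h
  have hz := (mul_eq_zero.mp this).resolve_left hy
  field_simp at hz ⊢
  linear_combination -hz

theorem interior_equilibrium_unique_general
    (a b c d p q r : ℝ)
    (ha : 0 < a) (hd : 0 < d)
    (hp : 0 < p)
    (ystar : ℝ) (hy : ystar = q / p - r)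
    (hya : ystar < a)
    (xstar : ℝ) (hx : xstar = (1 - a) / 2 + Real.sqrt (((1 + a) / 2) ^ 2 - ystar))
    (zstar : ℝ) (hz : zstar = (c * xstar / (a + xstar) - b) * (ystar + d))
    (x y z : ℝ) (hxpos : 0 < x) (hypos : 0 < y) (hzpos : 0 < z)
    (heq1 : x * (1 - x) - x * y / (x + a) = 0)
    (heq2 : c * x * y / (x + a) - b * y - y * z / (y + d) = 0)
    (heq3 : p * z ^ 2 - q * z ^ 2 / (y + r) = 0) :
    (x, y, z) = (xstar, ystar, zstar) := by
  obtain rfl : y = ystar := by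
    linarith [eq_div_of_mul_sq_sub_div_eq_zero hp.ne' hzpos.ne' heq3]
  obtain rfl : x = xstar := by
    have hquad := sq_sub_mul_add_eq_zero_of_mul_sub_div_eq_zero hxpos.ne'
      (add_pos hxpos ha).ne' heq1
    rw [eq_add_sqrt_of_sq_sub_mul_add_eq_zero (by linarith) hxpos hquad, hx]
    congr 2
    ring
  rw [eq_mul_of_div_sub_mul_sub_div_eq_zero hypos.ne' (add_pos hypos hd).ne' heq2, hz, add_comm a]

/-- Uniqueness of the interior (componentwise positive) equilibrium of the rescaled
Leslie–Gower tritrophic food chain system: any positive equilibrium coincides with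
`(x*, y*, z*)`. -/
theorem interior_equilibrium_unique
    (a b c d p q r : ℝ)
    (ha : 0 < a) (hb : 0 < b) (hc : 0 < c) (hd : 0 < d)
    (hp : 0 < p) (hq : 0 < q) (hr : 0 < r)
    (hqpr : q > p * r)
    (ystar : ℝ) (hy : ystar = q / p - r)
    (hya : ystar < a)
    (xstar : ℝ) (hx : xstar = (1 - a) / 2 + Real.sqrt (((1 + a) / 2) ^ 2 - ystar))
    (zstar : ℝ) (hz : zstar = (c * xstar / (a + xstar) - b) * (ystar + d))
    (x y z : ℝ) (hxpos : 0 < x) (hypos : 0 < y) (hzpos : 0 < z)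
    (heq1 : x * (1 - x) - x * y / (x + a) = 0)
    (heq2 : c * x * y / (x + a) - b * y - y * z / (y + d) = 0)
    (heq3 : p * z ^ 2 - q * z ^ 2 / (y + r) = 0) :
    (x, y, z) = (xstar, ystar, zstar) :=
  interior_equilibrium_unique_general a b c d p q r ha hd hp ystar hy hya xstar hx zstar hz x y z
    hxpos hypos hzpos heq1 heq2 heq3
end

section
/- Let A₁, A₂, A₃ be real numbers and let D(F) := 18A₁A₂A₃ + (A₁A₂)² − 4A₃A₁³ − 4A₂³ − 27A₃². If D(F) > 0, A₁ > 0, A₃ > 0, and A₁A₂ − A₃ > 0, then every complex root ξ of the cubic F(ξ) = ξ³ + A₁ξ² + A₂ξ + A₃ satisfies |arg(ξ)| > mπ/2 for every m ∈ (0, 1]. -/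
/-!
Routh–Hurwitz for cubics: under `A₁ > 0`, `A₃ > 0`, `A₁A₂ > A₃` every root has negative real
part, hence argument beyond `±π/2 ≥ ±mπ/2`. A real root `x ≥ 0` is impossible because all
coefficients are positive. For a non-real root `x + iy`, the imaginary part of the equation gives
`y² = 3x² + 2A₁x + A₂`; substituting this into the real part leaves
`8x³ + 8A₁x² + 2(A₁² + A₂)x + (A₁A₂ − A₃) = 0`, again impossible for `x ≥ 0`.
-/

namespace Complex

variable {a b c : ℝ} {z : ℂ}

lemma cubic_re_of_eq_zero (hz : z ^ 3 + a * z ^ 2 + b * z + c = 0) :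
    z.re ^ 3 - 3 * z.re * z.im ^ 2 + a * (z.re ^ 2 - z.im ^ 2) + b * z.re + c = 0 := by
  have h := congrArg re hz
  simp only [add_re, mul_re, ofReal_re, ofReal_im, pow_succ, pow_zero, one_mul, mul_im,
    zero_re] at h
  linear_combination h

lemma cubic_im_of_eq_zero (hz : z ^ 3 + a * z ^ 2 + b * z + c = 0) :
    z.im * (3 * z.re ^ 2 - z.im ^ 2 + 2 * a * z.re + b) = 0 := by
  have h := congrArg im hz
  simp only [add_im, mul_re, mul_im, ofReal_re, ofReal_im, pow_succ, pow_zero, one_mul,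
    zero_im] at h
  linear_combination h

theorem re_neg_of_cubic_eq_zero (ha : 0 < a) (hc : 0 < c) (habc : c < a * b)
    (hz : z ^ 3 + a * z ^ 2 + b * z + c = 0) : z.re < 0 := by
  have hb : 0 < b := pos_of_mul_pos_right (hc.trans habc) ha.le
  have hre := cubic_re_of_eq_zero hz
  by_contra! hx
  rcases mul_eq_zero.mp (cubic_im_of_eq_zero hz) with hy | hy
  · rw [hy] at hre
    nlinarith [pow_nonneg hx 3, mul_nonneg ha.le (sq_nonneg z.re), mul_nonneg hb.le hx]
  · have hred : 8 * z.re ^ 3 + 8 * a * z.re ^ 2 + 2 * (a ^ 2 + b) * z.re + (a * b - c) = 0 := by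
      linear_combination (-1 : ℝ) * hre + (3 * z.re + a) * hy
    nlinarith [pow_nonneg hx 3, mul_nonneg ha.le (sq_nonneg z.re),
      mul_nonneg (add_nonneg (sq_nonneg a) hb.le) hx]

end Complex

theorem matignon_stable_case_i_general
    (A₁ A₂ A₃ : ℝ)
    (h1 : 0 < A₁) (h3 : 0 < A₃) (h13 : 0 < A₁ * A₂ - A₃) :
    ∀ ξ : ℂ, ξ ^ 3 + (A₁ : ℂ) * ξ ^ 2 + (A₂ : ℂ) * ξ + (A₃ : ℂ) = 0 →
      ∀ m : ℝ, 0 < m → m ≤ 1 → m * Real.pi / 2 < |ξ.arg| := by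
  intro ξ hξ m _ hm1
  have hre : ξ.re < 0 := Complex.re_neg_of_cubic_eq_zero h1 h3 (sub_pos.mp h13) hξ
  calc m * Real.pi / 2 ≤ Real.pi / 2 := by gcongr; exact mul_le_of_le_one_left Real.pi_pos.le hm1
    _ < |ξ.arg| := not_le.mp fun h => hre.not_ge (Complex.abs_arg_le_pi_div_two_iff.mp h)

/-- Matignon stability criterion, case (i): if `D(F) > 0`, `A₁ > 0`, `A₃ > 0` and
`A₁A₂ − A₃ > 0`, then every complex root `ξ` of `F(ξ) = ξ³ + A₁ξ² + A₂ξ + A₃` satisfies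
`|arg ξ| > mπ/2` for every `m ∈ (0, 1]`. -/
theorem matignon_stable_case_i
    (A₁ A₂ A₃ : ℝ)
    (hD : 0 < 18 * A₁ * A₂ * A₃ + (A₁ * A₂) ^ 2 - 4 * A₃ * A₁ ^ 3 - 4 * A₂ ^ 3 - 27 * A₃ ^ 2)
    (h1 : 0 < A₁) (h3 : 0 < A₃) (h13 : 0 < A₁ * A₂ - A₃) :
    ∀ ξ : ℂ, ξ ^ 3 + (A₁ : ℂ) * ξ ^ 2 + (A₂ : ℂ) * ξ + (A₃ : ℂ) = 0 →
      ∀ m : ℝ, 0 < m → m ≤ 1 → m * Real.pi / 2 < |ξ.arg| :=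
  matignon_stable_case_i_general A₁ A₂ A₃ h1 h3 h13
end

section
/- Let A₁, A₂, A₃ be real numbers and let D(F) := 18A₁A₂A₃ + (A₁A₂)² − 4A₃A₁³ − 4A₂³ − 27A₃². If D(F) < 0, A₁ ≥ 0, A₂ ≥ 0, A₃ > 0, and 0 < m < 2/3, then every complex root ξ of the cubic F(ξ) = ξ³ + A₁ξ² + A₂ξ + A₃ satisfies |arg(ξ)| > mπ/2. -/
/-- Matignon stability criterion, case (ii): if `D(F) < 0`, `A₁ ≥ 0`, `A₂ ≥ 0`, `A₃ > 0`
and `0 < m < 2/3`, then every complex root `ξ` of `F(ξ) = ξ³ + A₁ξ² + A₂ξ + A₃` satisfies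
`|arg ξ| > mπ/2`. -/
theorem matignon_stable_case_ii
    (A₁ A₂ A₃ m : ℝ)
    (hD : 18 * A₁ * A₂ * A₃ + (A₁ * A₂) ^ 2 - 4 * A₃ * A₁ ^ 3 - 4 * A₂ ^ 3 - 27 * A₃ ^ 2 < 0)
    (h1 : 0 ≤ A₁) (h2 : 0 ≤ A₂) (h3 : 0 < A₃)
    (hm0 : 0 < m) (hm : m < 2 / 3) :
    ∀ ξ : ℂ, ξ ^ 3 + (A₁ : ℂ) * ξ ^ 2 + (A₂ : ℂ) * ξ + (A₃ : ℂ) = 0 →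
      m * Real.pi / 2 < |ξ.arg| := by
  intro ξ hξ
  by_contra hcon
  push_neg at hcon
  have hπ := Real.pi_pos
  set θ := ξ.arg with hθdef
  have hθ3 : |θ| < Real.pi / 3 := lt_of_le_of_lt hcon (by nlinarith)
  have hne : ξ ≠ 0 := by
    rintro rfl
    simp at hξ
    exact absurd hξ (ne_of_gt h3)
  set r := ‖ξ‖ with hrdef
  have hr : 0 < r := norm_pos_iff.mpr hne
  have hxi : (r : ℂ) * Complex.exp (θ * Complex.I) = ξ := Complex.norm_mul_exp_arg_mul_I ξ
  have hmul : ∀ a b : ℝ, Complex.exp ((a:ℂ) * Complex.I) * Complex.exp ((b:ℂ) * Complex.I)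
      = Complex.exp (((a+b : ℝ):ℂ) * Complex.I) := by
    intro a b; rw [← Complex.exp_add]; push_cast; ring_nf
  have hpow : ∀ n : ℕ, Complex.exp ((θ:ℂ) * Complex.I) ^ n
      = Complex.exp (((n * θ : ℝ):ℂ) * Complex.I) := by
    intro n; rw [← Complex.exp_nat_mul]; push_cast; ring_nf
  have t3 : Complex.exp (((-(3*θ/2)) : ℝ) * Complex.I) * ξ^3
      = ((r^3 : ℝ) : ℂ) * Complex.exp (((3*θ/2) : ℝ) * Complex.I) := by
    rw [← hxi, mul_pow, hpow 3, mul_left_comm, hmul]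
    push_cast; ring_nf
  have t2 : Complex.exp (((-(3*θ/2)) : ℝ) * Complex.I) * ((A₁:ℂ) * ξ^2)
      = ((A₁ * r^2 : ℝ) : ℂ) * Complex.exp (((θ/2) : ℝ) * Complex.I) := by
    rw [← hxi, mul_pow, hpow 2, mul_left_comm, mul_left_comm (Complex.exp _), hmul]
    push_cast; ring_nf
  have t1 : Complex.exp (((-(3*θ/2)) : ℝ) * Complex.I) * ((A₂:ℂ) * ξ)
      = ((A₂ * r : ℝ) : ℂ) * Complex.exp (((-(θ/2)) : ℝ) * Complex.I) := by
    rw [← hxi, mul_left_comm, mul_left_comm (Complex.exp _), hmul]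
    push_cast; ring_nf
  have hw : Complex.exp (((-(3*θ/2)) : ℝ) * Complex.I) * (ξ^3 + (A₁:ℂ)*ξ^2 + (A₂:ℂ)*ξ + (A₃:ℂ))
      = ((r^3 : ℝ) : ℂ) * Complex.exp (((3*θ/2) : ℝ) * Complex.I)
      + ((A₁ * r^2 : ℝ) : ℂ) * Complex.exp (((θ/2) : ℝ) * Complex.I)
      + ((A₂ * r : ℝ) : ℂ) * Complex.exp (((-(θ/2)) : ℝ) * Complex.I)
      + (A₃ : ℂ) * Complex.exp (((-(3*θ/2)) : ℝ) * Complex.I) := by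
    rw [mul_add, mul_add, mul_add, t3, t2, t1, mul_comm (Complex.exp _) (A₃:ℂ)]
  have hre := congrArg Complex.re (hw.symm.trans (by rw [hξ, mul_zero]))
  simp only [Complex.add_re, Complex.re_ofReal_mul, Complex.exp_ofReal_mul_I_re,
    Complex.zero_re, Real.cos_neg] at hre
  rw [abs_lt] at hθ3
  have hc1 : 0 < Real.cos (3*θ/2) := by
    apply Real.cos_pos_of_mem_Ioo
    constructor <;> nlinarith [hθ3.1, hθ3.2]
  have hc2 : 0 < Real.cos (θ/2) := by
    apply Real.cos_pos_of_mem_Ioo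
    constructor <;> nlinarith [hθ3.1, hθ3.2]
  nlinarith [mul_pos (mul_pos hr (mul_pos hr hr)) hc1, mul_pos h3 hc1,
    mul_nonneg (mul_nonneg h1 (mul_nonneg hr.le hr.le)) hc2.le,
    mul_nonneg (mul_nonneg h2 hr.le) hc2.le]
end

section
/- Let A₁, A₂, A₃ be real numbers and let D(F) := 18A₁A₂A₃ + (A₁A₂)² − 4A₃A₁³ − 4A₂³ − 27A₃². If D(F) < 0, A₁ > 0, A₂ > 0, A₁A₂ = A₃, and 0 < m < 1, then every complex root ξ of the cubic F(ξ) = ξ³ + A₁ξ² + A₂ξ + A₃ satisfies |arg(ξ)| > mπ/2. -/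
/-! With `A₃ = A₁A₂` the cubic factors as `(ξ + A₁)(ξ² + A₂)`, so its roots are `-A₁` and
`±i√A₂`. All of them are nonzero with nonpositive real part, hence `|arg ξ| ≥ π/2 > mπ/2`. -/

open Real

namespace Complex

theorem pi_div_two_le_abs_arg_of_re_nonpos {z : ℂ} (hre : z.re ≤ 0) (hz : z ≠ 0) :
    π / 2 ≤ |z.arg| := by
  by_contra! hlt
  rcases abs_arg_lt_pi_div_two_iff.mp hlt with hpos | hzero
  · linarith
  · exact hz hzero

theorem re_eq_zero_of_sq_eq_neg_ofReal {z : ℂ} {b : ℝ} (hb : 0 < b) (h : z ^ 2 = -(b : ℂ)) :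
    z.re = 0 := by
  have hre : z.re ^ 2 - z.im ^ 2 = -b := by
    simpa [sq, mul_re] using congrArg re h
  have him : z.re * z.im = 0 := by
    have := congrArg im h
    simp only [sq, mul_im, neg_im, ofReal_im, neg_zero] at this
    linarith
  rcases mul_eq_zero.mp him with hre0 | him0
  · exact hre0
  · nlinarith [sq_nonneg z.re]

end Complex

theorem cubic_eq_linear_mul_quadratic (a b ξ : ℂ) :
    ξ ^ 3 + a * ξ ^ 2 + b * ξ + a * b = (ξ + a) * (ξ ^ 2 + b) := by
  ring

theorem pi_div_two_le_abs_arg_of_cubic_root {A₁ A₂ : ℝ} (h1 : 0 < A₁) (h2 : 0 < A₂) {ξ : ℂ}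
    (hroot : ξ ^ 3 + (A₁ : ℂ) * ξ ^ 2 + (A₂ : ℂ) * ξ + (A₁ : ℂ) * A₂ = 0) :
    π / 2 ≤ |ξ.arg| := by
  rw [cubic_eq_linear_mul_quadratic] at hroot
  rcases mul_eq_zero.mp hroot with hlin | hquad
  · have hξ : ξ = -(A₁ : ℂ) := eq_neg_of_add_eq_zero_left hlin
    apply Complex.pi_div_two_le_abs_arg_of_re_nonpos
    · simp [hξ, h1.le]
    · simp [hξ, h1.ne']
  · have hsq : ξ ^ 2 = -(A₂ : ℂ) := eq_neg_of_add_eq_zero_left hquad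
    apply Complex.pi_div_two_le_abs_arg_of_re_nonpos
    · exact (Complex.re_eq_zero_of_sq_eq_neg_ofReal h2 hsq).le
    · rintro rfl
      simp [h2.ne'] at hsq

theorem matignon_stable_case_iv_general
    (A₁ A₂ A₃ m : ℝ)
    (h1 : 0 < A₁) (h2 : 0 < A₂) (h12 : A₁ * A₂ = A₃)
    (hm : m < 1) :
    ∀ ξ : ℂ, ξ ^ 3 + (A₁ : ℂ) * ξ ^ 2 + (A₂ : ℂ) * ξ + (A₃ : ℂ) = 0 →
      m * Real.pi / 2 < |ξ.arg| := by
  intro ξ hroot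
  rw [← h12, Complex.ofReal_mul] at hroot
  calc m * π / 2 < π / 2 := by nlinarith [pi_pos]
    _ ≤ |ξ.arg| := pi_div_two_le_abs_arg_of_cubic_root h1 h2 hroot

/-- Matignon stability criterion, case (iv): if `D(F) < 0`, `A₁ > 0`, `A₂ > 0`, `A₁A₂ = A₃`
and `0 < m < 1`, then every complex root `ξ` of `F(ξ) = ξ³ + A₁ξ² + A₂ξ + A₃` satisfies
`|arg ξ| > mπ/2`. -/
theorem matignon_stable_case_iv
    (A₁ A₂ A₃ m : ℝ)
    (hD : 18 * A₁ * A₂ * A₃ + (A₁ * A₂) ^ 2 - 4 * A₃ * A₁ ^ 3 - 4 * A₂ ^ 3 - 27 * A₃ ^ 2 < 0)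
    (h1 : 0 < A₁) (h2 : 0 < A₂) (h12 : A₁ * A₂ = A₃)
    (hm0 : 0 < m) (hm : m < 1) :
    ∀ ξ : ℂ, ξ ^ 3 + (A₁ : ℂ) * ξ ^ 2 + (A₂ : ℂ) * ξ + (A₃ : ℂ) = 0 →
      m * Real.pi / 2 < |ξ.arg| :=
  matignon_stable_case_iv_general A₁ A₂ A₃ m h1 h2 h12 hm
end
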